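/- A finitely generated algebra over ℤ/m (m ≥ 1) of Krull dimension 0 is a finite ring. -/

import Mathlib

/-- A finitely generated algebra over `ℤ/m` (`m ≥ 1`) of Krull dimension `0` is a finite ring. -/
theorem stmt6 (m : ℕ) (hm : 1 ≤ m) (A : Type*) [CommRing A] [Algebra (ZMod m) A]
    (hfg : Algebra.FiniteType (ZMod m) A) (hdim : ringKrullDim A = 0) :
    Finite A := by
  have : NeZero m := ⟨by omega⟩
  have : Ring.KrullDimLE 0 A := ⟨hdim.le⟩
  have : Module.Finite (ZMod m) A := (Module.finite_iff_krullDimLE_zero (ZMod m) A).mpr this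
  exact Module.finite_of_finite (ZMod m)
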